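/- arXiv:2206.05231 — 3 statements merged into one kernel-verified Lean document; each statement's English description precedes it below -/
import Mathlib

section
/- Let (X,d) be a metric space and scl a scaling. Then the packing scale satisfies sup{α > 0 : P^{scl_α}(X) = +∞} = scl_P X = inf{α > 0 : P^{scl_α}(X) = 0} (with sup ∅ = 0 and inf ∅ = +∞), where P^φ denotes the packing φ-measure. -/
open Filter MeasureTheory Metric Set
open scoped ENNReal Topology NNReal

noncomputable section

/-- A *scaling* is a family `(s α)_{α>0}` of positive non-decreasing functions on `(0,1)`
such that for all `α > β > 0` there is `λ₀ > 1` with, for every `λ ∈ (1, λ₀)`,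
`s α ε / s β (ε^λ) → 0` and `s α ε / (s β ε)^λ → 0` as `ε → 0⁺`. -/
def IsScaling (s : ℝ → ℝ → ℝ) : Prop :=
  (∀ α : ℝ, 0 < α → ∀ ε ∈ Set.Ioo (0:ℝ) 1, 0 < s α ε) ∧
  (∀ α : ℝ, 0 < α → MonotoneOn (s α) (Set.Ioo (0:ℝ) 1)) ∧
  (∀ α β : ℝ, 0 < β → β < α → ∃ l₀ > (1:ℝ), ∀ l ∈ Set.Ioo (1:ℝ) l₀,
    Tendsto (fun ε : ℝ => s α ε / s β (ε ^ l)) (𝓝[>] (0:ℝ)) (𝓝 0) ∧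
    Tendsto (fun ε : ℝ => s α ε / (s β ε) ^ l) (𝓝[>] (0:ℝ)) (𝓝 0))

/-- The covering number `N_ε(E)`: minimal cardinality of a finite cover of `E` by balls of
radius `ε` centered in `E` (`+∞` if there is no such finite cover). -/
def coveringNumber {X : Type*} [MetricSpace X] (E : Set X) (ε : ℝ) : ℝ≥0∞ :=
  ⨅ (t : Finset X) (_ : (↑t : Set X) ⊆ E ∧ E ⊆ ⋃ x ∈ t, ball x ε), (t.card : ℝ≥0∞)

/-- Lower box scale of a set. -/
def lowerBoxScale {X : Type*} [MetricSpace X] (s : ℝ → ℝ → ℝ) (E : Set X) : ℝ≥0∞ :=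
  ⨆ (α : ℝ) (_ : 0 < α ∧ Tendsto (fun ε : ℝ => coveringNumber E ε * ENNReal.ofReal (s α ε))
      (𝓝[>] (0:ℝ)) (𝓝 (⊤ : ℝ≥0∞))), ENNReal.ofReal α

/-- Upper box scale of a set. -/
def upperBoxScale {X : Type*} [MetricSpace X] (s : ℝ → ℝ → ℝ) (E : Set X) : ℝ≥0∞ :=
  ⨅ (α : ℝ) (_ : 0 < α ∧ Tendsto (fun ε : ℝ => coveringNumber E ε * ENNReal.ofReal (s α ε))
      (𝓝[>] (0:ℝ)) (𝓝 (0 : ℝ≥0∞))), ENNReal.ofReal α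

/-- `H_ε^φ(E)`: Hausdorff pre-measure at scale `ε`, via countable covers by balls of radii
at most `ε`. -/
def hausdorffPre {X : Type*} [MetricSpace X] (φ : ℝ → ℝ) (E : Set X) (ε : ℝ) : ℝ≥0∞ :=
  ⨅ (c : ℕ → X) (r : ℕ → ℝ) (t : Set ℕ)
    (_ : (∀ n ∈ t, r n ∈ Set.Ioc (0:ℝ) ε) ∧ E ⊆ ⋃ n ∈ t, ball (c n) (r n)),
    ∑' n : t, ENNReal.ofReal (φ (r n))

/-- `H^φ(E) = lim_{ε→0} H_ε^φ(E)`. -/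
def hausdorffMeasureOf {X : Type*} [MetricSpace X] (φ : ℝ → ℝ) (E : Set X) : ℝ≥0∞ :=
  ⨆ (ε : ℝ) (_ : 0 < ε), hausdorffPre φ E ε

/-- Hausdorff scale of a set. -/
def hausdorffScale {X : Type*} [MetricSpace X] (s : ℝ → ℝ → ℝ) (E : Set X) : ℝ≥0∞ :=
  ⨆ (α : ℝ) (_ : 0 < α ∧ hausdorffMeasureOf (s α) E = ⊤), ENNReal.ofReal α

/-- Packing scale of a set, via countable covers and upper box scales. -/
def packingScale {X : Type*} [MetricSpace X] (s : ℝ → ℝ → ℝ) (A : Set X) : ℝ≥0∞ :=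
  ⨅ (E : ℕ → Set X) (_ : (⋃ n, E n) = A), ⨆ n, upperBoxScale s (E n)

/-- Lower local scale of a measure at a point. -/
def lowerLocalScale {X : Type*} [MetricSpace X] [MeasurableSpace X]
    (s : ℝ → ℝ → ℝ) (μ : Measure X) (x : X) : ℝ≥0∞ :=
  ⨆ (α : ℝ) (_ : 0 < α ∧ Tendsto (fun ε : ℝ => μ (ball x ε) / ENNReal.ofReal (s α ε))
      (𝓝[>] (0:ℝ)) (𝓝 (0 : ℝ≥0∞))), ENNReal.ofReal α

/-- Upper local scale of a measure at a point. -/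
def upperLocalScale {X : Type*} [MetricSpace X] [MeasurableSpace X]
    (s : ℝ → ℝ → ℝ) (μ : Measure X) (x : X) : ℝ≥0∞ :=
  ⨅ (α : ℝ) (_ : 0 < α ∧ Tendsto (fun ε : ℝ => μ (ball x ε) / ENNReal.ofReal (s α ε))
      (𝓝[>] (0:ℝ)) (𝓝 (⊤ : ℝ≥0∞))), ENNReal.ofReal α

/-- Scale of a measure: infimum of the scale over Borel sets of positive measure. -/
def measureScale {X : Type*} [MetricSpace X] [MeasurableSpace X]
    (sc : Set X → ℝ≥0∞) (μ : Measure X) : ℝ≥0∞ :=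
  ⨅ (E : Set X) (_ : MeasurableSet E ∧ 0 < μ E), sc E

/-- `*`-scale of a measure: infimum of the scale over Borel sets of full measure. -/
def measureScaleStar {X : Type*} [MetricSpace X] [MeasurableSpace X]
    (sc : Set X → ℝ≥0∞) (μ : Measure X) : ℝ≥0∞ :=
  ⨅ (E : Set X) (_ : MeasurableSet E ∧ μ Eᶜ = 0), sc E

/-- Quantization number `Q_μ(ε)`. -/
def quantizationNumber {X : Type*} [MetricSpace X] [MeasurableSpace X]
    (μ : Measure X) (ε : ℝ) : ℝ≥0∞ :=
  ⨅ (t : Finset X) (_ : ∫⁻ x, (⨅ c ∈ t, edist x c) ∂μ ≤ ENNReal.ofReal ε), (t.card : ℝ≥0∞)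

/-- Lower quantization scale of a measure. -/
def lowerQuantScale {X : Type*} [MetricSpace X] [MeasurableSpace X]
    (s : ℝ → ℝ → ℝ) (μ : Measure X) : ℝ≥0∞ :=
  ⨆ (α : ℝ) (_ : 0 < α ∧ Tendsto (fun ε : ℝ => quantizationNumber μ ε * ENNReal.ofReal (s α ε))
      (𝓝[>] (0:ℝ)) (𝓝 (⊤ : ℝ≥0∞))), ENNReal.ofReal α

/-- Upper quantization scale of a measure. -/
def upperQuantScale {X : Type*} [MetricSpace X] [MeasurableSpace X]
    (s : ℝ → ℝ → ℝ) (μ : Measure X) : ℝ≥0∞ :=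
  ⨅ (α : ℝ) (_ : 0 < α ∧ Tendsto (fun ε : ℝ => quantizationNumber μ ε * ENNReal.ofReal (s α ε))
      (𝓝[>] (0:ℝ)) (𝓝 (0 : ℝ≥0∞))), ENNReal.ofReal α

/-- Packing number `Ñ_ε(E)`: maximal cardinality of an `ε`-separated subset of `E`. -/
def packingNumber {X : Type*} [MetricSpace X] (E : Set X) (ε : ℝ) : ℝ≥0∞ :=
  ⨆ (t : Finset X) (_ : (↑t : Set X) ⊆ E ∧ ∀ x ∈ t, ∀ y ∈ t, x ≠ y → ε ≤ dist x y),
    (t.card : ℝ≥0∞)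

/-- `P_ε^φ(E)`: supremum of `Σ φ(r_i)` over `ε`-packs of `E` (pairwise disjoint balls of `E`,
centered in `E`, with radii at most `ε`). -/
def packingPre {X : Type*} [MetricSpace X] (φ : ℝ → ℝ) (E : Set X) (ε : ℝ) : ℝ≥0∞ :=
  ⨆ (t : Finset (X × ℝ)) (_ : (∀ p ∈ t, p.1 ∈ E ∧ p.2 ∈ Set.Ioc (0:ℝ) ε) ∧
      (↑t : Set (X × ℝ)).Pairwise fun p q => Disjoint (ball p.1 p.2 ∩ E) (ball q.1 q.2 ∩ E)),
    ∑ p ∈ t, ENNReal.ofReal (φ p.2)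

/-- The packing pre-measure `P_0^φ(E) = lim_{ε→0} P_ε^φ(E)`. -/
def packingPre0 {X : Type*} [MetricSpace X] (φ : ℝ → ℝ) (E : Set X) : ℝ≥0∞ :=
  ⨅ (ε : ℝ) (_ : 0 < ε), packingPre φ E ε

/-- The packing `φ`-measure `P^φ(E)`. -/
def packingMeasureOf {X : Type*} [MetricSpace X] (φ : ℝ → ℝ) (E : Set X) : ℝ≥0∞ :=
  ⨅ (F : ℕ → Set X) (_ : (⋃ n, F n) = E), ∑' n, packingPre0 φ (F n)

/-!
If `P_0^{s_α}(F) < ∞`, a maximal `2δ`-separated subset of `F` is at once a cover of `F` by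
`2δ`-balls and the centre set of a pack of `δ`-balls, so `N(F, 2δ) s_α(δ)` stays bounded; the
scaling axiom then forces `N(F, ε) s_β(ε) → 0` for every `β > α`. Hence `P^{s_α}(X) < ∞` gives
`scl_P X ≤ α`.

Conversely, let `N(E, ε) s_β(ε) → 0` with `β < α` and fix `β < γ < α`. Sorting the balls of a
pack by dyadic radius `ρ 2^{-j}`, the balls of index at most `n` have `ρ 2^{-n-1}`-separated
centres, so there are at most `N(E, ρ 2^{-n-2}) ≲ η / s_γ(ρ 2^{-n})` of them, while
`s_α ≤ s_γ^{1+θ}` near `0`. Abel summation bounds the `s_α`-sum of the pack by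
`η s_γ(ρ)^θ (1 + 1/θ)`, so `P_0^{s_α}(E) = 0`, and `scl_P X < α` gives `P^{s_α}(X) = 0`.
-/

theorem rpow_one_add_mul_inv_sub_inv_le {x y θ : ℝ} (hx : 0 < x) (hxy : x ≤ y)
    (hθ0 : 0 < θ) (hθ1 : θ ≤ 1) :
    x ^ (1 + θ) * (x⁻¹ - y⁻¹) ≤ (y ^ θ - x ^ θ) / θ := by
  have hy : 0 < y := hx.trans_le hxy
  have hr : 0 ≤ 1 - x / y := by rw [sub_nonneg, div_le_one hy]; exact hxy
  have bernoulli : (x / y) ^ θ ≤ 1 + θ * (x / y - 1) := by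
    simpa using rpow_one_add_le_one_add_mul_self (s := x / y - 1)
      (by linarith [div_nonneg hx.le hy.le]) hθ0.le hθ1
  calc x ^ (1 + θ) * (x⁻¹ - y⁻¹) = x ^ θ * (1 - x / y) := by
        rw [Real.rpow_add hx, Real.rpow_one]; field_simp
    _ ≤ y ^ θ * (1 - x / y) := by gcongr
    _ ≤ y ^ θ * ((1 - (x / y) ^ θ) / θ) := by
        gcongr; rw [le_div_iff₀ hθ0]; linarith
    _ = (y ^ θ - x ^ θ) / θ := by
        rw [Real.div_rpow hx.le hy.le]; field_simp

/-- Abel summation against the budget `η / c n`: the invariant carried through the induction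
is `∑ m k c_k^{1+θ} + (η / c n - ∑ m k) c_n^{1+θ} ≤ η c₀^θ + η (c₀^θ - c_n^θ) / θ`. -/
theorem sum_range_mul_rpow_le {θ η : ℝ} {c m : ℕ → ℝ} (hθ0 : 0 < θ) (hθ1 : θ ≤ 1)
    (hη : 0 ≤ η) (hc : ∀ n, 0 < c n) (hc_anti : Antitone c)
    (hm : ∀ n, ∑ k ∈ Finset.range (n + 1), m k ≤ η / c n) (n : ℕ) :
    ∑ k ∈ Finset.range (n + 1), m k * c k ^ (1 + θ) ≤ η * c 0 ^ θ * (1 + θ⁻¹) := by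
  have key : ∀ n, ∑ k ∈ Finset.range (n + 1), m k * c k ^ (1 + θ)
      + (η / c n - ∑ k ∈ Finset.range (n + 1), m k) * c n ^ (1 + θ)
      ≤ η * c 0 ^ θ + η * ((c 0 ^ θ - c n ^ θ) / θ) := by
    intro n
    induction n with
    | zero =>
      have hc0 := (hc 0).ne'
      have : η / c 0 * c 0 ^ (1 + θ) = η * c 0 ^ θ := by
        rw [Real.rpow_add (hc 0), Real.rpow_one]; field_simp
      simp only [zero_add, Finset.sum_range_one, sub_self, zero_div, mul_zero, add_zero]
      linarith
    | succ n ih =>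
      rw [Finset.sum_range_succ, Finset.sum_range_succ (fun k => m k)]
      have hslack : 0 ≤ η / c n - ∑ k ∈ Finset.range (n + 1), m k := sub_nonneg.2 (hm n)
      have hshrink := mul_le_mul_of_nonneg_left
        (Real.rpow_le_rpow (hc (n + 1)).le (hc_anti n.le_succ) (by linarith : (0:ℝ) ≤ 1 + θ))
        hslack
      have hstep := mul_le_mul_of_nonneg_left
        (rpow_one_add_mul_inv_sub_inv_le (hc (n + 1)) (hc_anti n.le_succ) hθ0 hθ1) hη
      linear_combination ih + hshrink + hstep
  have hlast : 0 ≤ (η / c n - ∑ k ∈ Finset.range (n + 1), m k) * c n ^ (1 + θ) :=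
    mul_nonneg (sub_nonneg.2 (hm n)) (Real.rpow_nonneg (hc n).le _)
  have hcn : 0 ≤ η * (c n ^ θ / θ) :=
    mul_nonneg hη (div_nonneg (Real.rpow_nonneg (hc n).le _) hθ0.le)
  linear_combination key n + hlast + hcn

theorem tendsto_rpow_nhdsGT_zero {θ : ℝ} (hθ : 0 < θ) :
    Tendsto (fun x : ℝ => x ^ θ) (𝓝[>] 0) (𝓝 0) := by
  simpa [Real.zero_rpow hθ.ne'] using
    (Real.continuousAt_rpow_const 0 θ (Or.inr hθ.le)).tendsto.mono_left nhdsWithin_le_nhds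

theorem eventually_rpow_one_add_le_mul {θ c : ℝ} (hθ : 0 < θ) (hc : 0 < c) :
    ∀ᶠ x in 𝓝[>] (0:ℝ), x ^ (1 + θ) ≤ c * x := by
  filter_upwards [(tendsto_rpow_nhdsGT_zero hθ).eventually (ge_mem_nhds hc),
    self_mem_nhdsWithin] with x hx (hx0 : 0 < x)
  rw [Real.rpow_add hx0, Real.rpow_one, mul_comm]
  exact mul_le_mul_of_nonneg_right hx hx0.le

theorem iInf_ofReal_le_of_forall_gt {P : ℝ → Prop} {a : ℝ} (ha : 0 ≤ a)
    (h : ∀ b, a < b → P b) :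
    (⨅ (b : ℝ) (_ : 0 < b ∧ P b), ENNReal.ofReal b) ≤ ENNReal.ofReal a := by
  refine le_of_forall_gt fun c hc => ?_
  obtain ⟨b, -, hab, hbc⟩ := ENNReal.lt_iff_exists_real_btwn.1 hc
  have hab' : a < b := (ENNReal.ofReal_lt_ofReal_iff'.1 hab).1
  exact (iInf₂_le b ⟨ha.trans_lt hab', h b hab'⟩).trans_lt hbc

theorem iSup_ofReal_eq_and_eq_iInf_ofReal {f : ℝ → ℝ≥0∞} {D : ℝ≥0∞}
    (h_zero : ∀ α, 0 < α → D < ENNReal.ofReal α → f α = 0)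
    (h_top : ∀ α, 0 < α → f α ≠ ⊤ → D ≤ ENNReal.ofReal α) :
    (⨆ (α : ℝ) (_ : 0 < α ∧ f α = ⊤), ENNReal.ofReal α) = D ∧
      D = ⨅ (α : ℝ) (_ : 0 < α ∧ f α = 0), ENNReal.ofReal α := by
  have h_top' : ∀ α, 0 < α → f α = ⊤ → ENNReal.ofReal α ≤ D := fun α hα hf =>
    not_lt.1 fun hD => ENNReal.zero_ne_top (h_zero α hα hD ▸ hf)
  refine ⟨le_antisymm (iSup₂_le fun α hα => h_top' α hα.1 hα.2) ?_,
    le_antisymm (le_iInf₂ fun α hα => h_top α hα.1 (hα.2 ▸ ENNReal.zero_ne_top)) ?_⟩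
  · refine le_of_not_gt fun hlt => ?_
    obtain ⟨r, -, hsup, hD⟩ := ENNReal.lt_iff_exists_real_btwn.1 hlt
    have hr : 0 < r := ENNReal.ofReal_pos.1 (zero_le.trans_lt hsup)
    have hfr : f r ≠ ⊤ := fun hf => (le_iSup₂_of_le r ⟨hr, hf⟩ le_rfl).not_gt hsup
    exact (h_top r hr hfr).not_gt hD
  · refine le_of_not_gt fun hlt => ?_
    obtain ⟨r, -, hD, hinf⟩ := ENNReal.lt_iff_exists_real_btwn.1 hlt
    have hr : 0 < r := ENNReal.ofReal_pos.1 (zero_le.trans_lt hD)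
    exact (iInf₂_le (f := fun α (_ : 0 < α ∧ f α = 0) => ENNReal.ofReal α) r
      ⟨hr, h_zero r hr hD⟩).not_gt hinf

section Packing

variable {X : Type*} [MetricSpace X]

/-- The `ε`-packs of `E` over which `packingPre φ E ε` takes its supremum. -/
def IsPack (E : Set X) (ε : ℝ) (t : Finset (X × ℝ)) : Prop :=
  (∀ p ∈ t, p.1 ∈ E ∧ p.2 ∈ Set.Ioc (0:ℝ) ε) ∧
    (↑t : Set (X × ℝ)).Pairwise fun p q => Disjoint (ball p.1 p.2 ∩ E) (ball q.1 q.2 ∩ E)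

theorem IsPack.sum_le_packingPre {φ : ℝ → ℝ} {E : Set X} {ε : ℝ} {t : Finset (X × ℝ)}
    (ht : IsPack E ε t) : ∑ p ∈ t, ENNReal.ofReal (φ p.2) ≤ packingPre φ E ε :=
  le_iSup₂ (f := fun (t : Finset (X × ℝ)) (_ : IsPack E ε t) =>
    ∑ p ∈ t, ENNReal.ofReal (φ p.2)) t ht

theorem card_le_coveringNumber {ι : Type*} {s : Finset ι} {f : ι → X} {E : Set X} {δ : ℝ}
    (hf : ∀ i ∈ s, f i ∈ E) (hsep : ∀ i ∈ s, ∀ j ∈ s, dist (f i) (f j) < 2 * δ → i = j) :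
    (s.card : ℝ≥0∞) ≤ coveringNumber E δ := by
  refine le_iInf₂ fun u hu => ?_
  have := Finset.card_le_card_of_forall_subsingleton (fun i x => f i ∈ ball x δ)
    (fun i hi => by simpa using hu.2 (hf i hi))
    (fun x _ i hi j hj => hsep i hi.1 j hj.1 (by
      linarith [dist_triangle_right (f i) (f j) x, mem_ball.1 hi.2, mem_ball.1 hj.2]))
  exact_mod_cast this

theorem IsPack.card_filter_le_coveringNumber {E : Set X} {ε δ : ℝ} {t : Finset (X × ℝ)}
    (ht : IsPack E ε t) :
    ((t.filter fun p => 2 * δ ≤ p.2).card : ℝ≥0∞) ≤ coveringNumber E δ := by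
  refine card_le_coveringNumber (f := Prod.fst)
    (fun p hp => (ht.1 p (Finset.mem_filter.1 hp).1).1) fun p hp q hq hpq => ?_
  rw [Finset.mem_filter] at hp hq
  by_contra hne
  have hpE := (ht.1 p hp.1).1
  refine Set.disjoint_left.1 (ht.2 hp.1 hq.1 hne)
    ⟨mem_ball_self (ht.1 p hp.1).2.1, hpE⟩ ⟨?_, hpE⟩
  rw [mem_ball]
  linarith [hq.2]

theorem isPack_map_of_separated {E : Set X} {u : Finset X} {δ ε : ℝ} (hδ : 0 < δ)
    (hδε : δ ≤ ε) (huE : ↑u ⊆ E) (hu : (↑u : Set X).Pairwise fun x y => 2 * δ ≤ dist x y) :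
    IsPack E ε (u.map ⟨fun x => (x, δ), Prod.mk_left_injective δ⟩) := by
  refine ⟨fun p hp => ?_, fun p hp q hq hpq => ?_⟩
  · obtain ⟨x, hx, rfl⟩ := Finset.mem_map.1 hp
    exact ⟨huE hx, hδ, hδε⟩
  · simp only [Finset.coe_map, Function.Embedding.coeFn_mk, Set.mem_image,
      Finset.mem_coe] at hp hq
    obtain ⟨x, hx, rfl⟩ := hp
    obtain ⟨y, hy, rfl⟩ := hq
    have hxy : x ≠ y := fun h => hpq (h ▸ rfl)
    refine Set.disjoint_left.2 fun z hz hz' => ?_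
    linarith [hu hx hy hxy, dist_triangle_left x y z, mem_ball.1 hz.1, mem_ball.1 hz'.1]

theorem card_mul_le_packingPre_of_separated {φ : ℝ → ℝ} {E : Set X} {u : Finset X}
    {δ ε : ℝ} (hδ : 0 < δ) (hδε : δ ≤ ε) (huE : ↑u ⊆ E)
    (hu : (↑u : Set X).Pairwise fun x y => 2 * δ ≤ dist x y) :
    (u.card : ℝ≥0∞) * ENNReal.ofReal (φ δ) ≤ packingPre φ E ε := by
  have := (isPack_map_of_separated hδ hδε huE hu).sum_le_packingPre (φ := φ)
  simpa only [Finset.sum_map, Function.Embedding.coeFn_mk, Finset.sum_const,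
    nsmul_eq_mul] using this

theorem exists_separated_cover {E : Set X} {r : ℝ} (hr : 0 < r) {B : ℕ}
    (hB : ∀ u : Finset X, ↑u ⊆ E → (↑u : Set X).Pairwise (fun x y => r ≤ dist x y) →
      u.card ≤ B) :
    ∃ u : Finset X, ↑u ⊆ E ∧ (↑u : Set X).Pairwise (fun x y => r ≤ dist x y) ∧
      E ⊆ ⋃ x ∈ u, ball x r := by
  classical
  let P : ℕ → Prop := fun n => ∃ u : Finset X, ↑u ⊆ E ∧
    (↑u : Set X).Pairwise (fun x y => r ≤ dist x y) ∧ u.card = n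
  obtain ⟨u, huE, hu, hcard⟩ : P (Nat.findGreatest P B) :=
    Nat.findGreatest_spec (Nat.zero_le B) ⟨∅, by simp⟩
  refine ⟨u, huE, hu, fun y hy => ?_⟩
  by_contra hy'
  simp only [mem_iUnion, mem_ball, not_exists, not_lt] at hy'
  have hyu : y ∉ u := fun h => (hy' y h).not_gt (by simpa using hr)
  have hins : P (u.card + 1) := ⟨insert y u, by
    refine ⟨?_, ?_, Finset.card_insert_of_notMem hyu⟩
    · rw [Finset.coe_insert]; exact Set.insert_subset hy huE
    · rw [Finset.coe_insert, Set.pairwise_insert]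
      exact ⟨hu, fun x hx _ => ⟨hy' x hx, dist_comm x y ▸ hy' x hx⟩⟩⟩
  obtain ⟨v, hvE, hv, hvcard⟩ := hins
  exact Nat.findGreatest_is_greatest (P := P) (n := B) (by omega) (hvcard ▸ hB v hvE hv)
    ⟨v, hvE, hv, hvcard⟩

theorem coveringNumber_mul_le_packingPre {φ : ℝ → ℝ} {E : Set X} {δ ε : ℝ} (hδ : 0 < δ)
    (hδε : δ ≤ ε) (hφ : 0 < φ δ) (hfin : packingPre φ E ε ≠ ⊤) :
    coveringNumber E (2 * δ) * ENNReal.ofReal (φ δ) ≤ packingPre φ E ε := by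
  have hv : ENNReal.ofReal (φ δ) ≠ 0 := by simpa using hφ
  have hbound : ∀ u : Finset X, ↑u ⊆ E → (↑u : Set X).Pairwise (fun x y => 2 * δ ≤ dist x y) →
      u.card ≤ ⌊(packingPre φ E ε / ENNReal.ofReal (φ δ)).toReal⌋₊ := by
    intro u huE hu
    have hle : (u.card : ℝ≥0∞) ≤ packingPre φ E ε / ENNReal.ofReal (φ δ) :=
      (ENNReal.le_div_iff_mul_le (Or.inl hv) (Or.inl ENNReal.ofReal_ne_top)).2
        (card_mul_le_packingPre_of_separated hδ hδε huE hu)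
    apply Nat.le_floor
    simpa using ENNReal.toReal_mono (ENNReal.div_ne_top hfin hv) hle
  obtain ⟨u, huE, hu, hcover⟩ := exists_separated_cover (by positivity) hbound
  calc coveringNumber E (2 * δ) * ENNReal.ofReal (φ δ)
      ≤ u.card * ENNReal.ofReal (φ δ) := by
        gcongr
        exact iInf₂_le u ⟨huE, hcover⟩
    _ ≤ packingPre φ E ε := card_mul_le_packingPre_of_separated hδ hδε huE hu

end Packing

section BoxScale

variable {X : Type*} [MetricSpace X] {s : ℝ → ℝ → ℝ}

/-- The packing pre-measure at a fixed scale bounds `N(F, 2δ) s_α(δ)`, and since `ε^λ ≤ ε / 2`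
near `0`, the scaling axiom sends `s_β(ε) / s_α(ε / 2) ≤ s_β(ε) / s_α(ε^λ)` to `0`. -/
theorem tendsto_coveringNumber_mul_of_packingPre_ne_top (hs : IsScaling s) {F : Set X}
    {α β ε₀ : ℝ} (hα : 0 < α) (hαβ : α < β) (hε₀ : 0 < ε₀)
    (hfin : packingPre (s α) F ε₀ ≠ ⊤) :
    Tendsto (fun ε => coveringNumber F ε * ENNReal.ofReal (s β ε)) (𝓝[>] 0) (𝓝 0) := by
  obtain ⟨hpos, hmono, hlim⟩ := hs
  obtain ⟨l₀, hl₀, hl⟩ := hlim β α hα hαβ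
  have hθ : 0 < (l₀ - 1) / 2 := by linarith
  have hsmall : ∀ᶠ ε in 𝓝[>] (0:ℝ),
      (0 < ε ∧ ε < 1 ∧ ε ≤ 2 * ε₀) ∧ ε ^ (1 + (l₀ - 1) / 2) ≤ 1 / 2 * ε := by
    refine Eventually.and ?_ (eventually_rpow_one_add_le_mul hθ one_half_pos)
    filter_upwards [Ioo_mem_nhdsGT (show (0:ℝ) < min 1 (2 * ε₀) by positivity)]
      with ε ⟨hε0, hε⟩
    exact ⟨hε0, hε.trans_le (min_le_left _ _), hε.le.trans (min_le_right _ _)⟩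
  have hratio : Tendsto (fun ε => s β ε / s α (ε / 2)) (𝓝[>] 0) (𝓝 0) := by
    refine squeeze_zero' ?_ ?_ (hl (1 + (l₀ - 1) / 2) ⟨by linarith, by linarith⟩).1
    · filter_upwards [hsmall] with ε ⟨⟨hε0, hε1, _⟩, _⟩
      exact div_nonneg (hpos β (hα.trans hαβ) ε ⟨hε0, hε1⟩).le
        (hpos α hα _ ⟨by positivity, by linarith⟩).le
    · filter_upwards [hsmall] with ε ⟨⟨hε0, hε1, _⟩, hεθ⟩
      have hεθ0 : 0 < ε ^ (1 + (l₀ - 1) / 2) := Real.rpow_pos_of_pos hε0 _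
      refine div_le_div_of_nonneg_left (hpos β (hα.trans hαβ) ε ⟨hε0, hε1⟩).le
        (hpos α hα _ ⟨hεθ0, by linarith⟩) ?_
      exact hmono α hα ⟨hεθ0, by linarith⟩ ⟨by positivity, by linarith⟩ (by linarith)
  have hbound : ∀ᶠ ε in 𝓝[>] (0:ℝ), coveringNumber F ε * ENNReal.ofReal (s β ε) ≤
      packingPre (s α) F ε₀ * ENNReal.ofReal (s β ε / s α (ε / 2)) := by
    filter_upwards [hsmall] with ε ⟨⟨hε0, hε1, hεε₀⟩, _⟩
    have hδ : 0 < s α (ε / 2) := hpos α hα _ ⟨by positivity, by linarith⟩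
    calc coveringNumber F ε * ENNReal.ofReal (s β ε)
        = coveringNumber F (2 * (ε / 2)) * ENNReal.ofReal (s α (ε / 2)) *
            ENNReal.ofReal (s β ε / s α (ε / 2)) := by
          rw [mul_assoc, ← ENNReal.ofReal_mul hδ.le, mul_div_cancel₀ _ hδ.ne',
            mul_div_cancel₀ ε two_ne_zero]
      _ ≤ packingPre (s α) F ε₀ * ENNReal.ofReal (s β ε / s α (ε / 2)) := by
          gcongr
          exact coveringNumber_mul_le_packingPre (by positivity) (by linarith) hδ hfin
  have hlim0 := ENNReal.Tendsto.const_mul (ENNReal.tendsto_ofReal hratio) (Or.inr hfin)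
  rw [ENNReal.ofReal_zero, mul_zero] at hlim0
  exact tendsto_of_tendsto_of_tendsto_of_le_of_le' tendsto_const_nhds hlim0
    (Eventually.of_forall fun _ => zero_le) hbound

theorem upperBoxScale_le_of_packingPre0_ne_top (hs : IsScaling s) {F : Set X} {α : ℝ}
    (hα : 0 < α) (h : packingPre0 (s α) F ≠ ⊤) : upperBoxScale s F ≤ ENNReal.ofReal α := by
  obtain ⟨ε₀, hε₀, hfin⟩ : ∃ ε₀, 0 < ε₀ ∧ packingPre (s α) F ε₀ ≠ ⊤ := by
    simpa [packingPre0, iInf_lt_iff, lt_top_iff_ne_top] using h.lt_top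
  exact iInf_ofReal_le_of_forall_gt hα.le fun β hβ =>
    tendsto_coveringNumber_mul_of_packingPre_ne_top hs hα hβ hε₀ hfin

theorem packingScale_le_of_packingMeasureOf_ne_top (hs : IsScaling s) {A : Set X} {α : ℝ}
    (hα : 0 < α) (h : packingMeasureOf (s α) A ≠ ⊤) : packingScale s A ≤ ENNReal.ofReal α := by
  obtain ⟨F, hF, hsum⟩ : ∃ F : ℕ → Set X, (⋃ n, F n) = A ∧
      ∑' n, packingPre0 (s α) (F n) ≠ ⊤ := by
    simpa [packingMeasureOf, iInf_lt_iff, lt_top_iff_ne_top] using h.lt_top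
  refine iInf₂_le_of_le F hF (iSup_le fun n => ?_)
  exact upperBoxScale_le_of_packingPre0_ne_top hs hα
    (ne_top_of_le_ne_top hsum (ENNReal.le_tsum n))

end BoxScale

theorem IsScaling.exists_exponent {s : ℝ → ℝ → ℝ} (hs : IsScaling s) {α β γ : ℝ}
    (hβ : 0 < β) (hβγ : β < γ) (hγα : γ < α) :
    ∃ θ : ℝ, 0 < θ ∧ θ ≤ 1 ∧
      Tendsto (fun ε => s α ε / s γ ε ^ (1 + θ)) (𝓝[>] 0) (𝓝 0) ∧
      Tendsto (fun ε => s γ ε / s β (ε ^ (1 + θ))) (𝓝[>] 0) (𝓝 0) := by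
  obtain ⟨l₁, hl₁, H₁⟩ := hs.2.2 α γ (hβ.trans hβγ) hγα
  obtain ⟨l₂, hl₂, H₂⟩ := hs.2.2 γ β hβ hβγ
  set θ := min (min ((l₁ - 1) / 2) ((l₂ - 1) / 2)) 1
  have hθ : 0 < θ := lt_min (lt_min (by linarith) (by linarith)) one_pos
  have hθ₁ : θ ≤ (l₁ - 1) / 2 := (min_le_left _ _).trans (min_le_left _ _)
  have hθ₂ : θ ≤ (l₂ - 1) / 2 := (min_le_left _ _).trans (min_le_right _ _)
  exact ⟨θ, hθ, min_le_right _ _, (H₁ (1 + θ) ⟨by linarith, by linarith⟩).2,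
    (H₂ (1 + θ) ⟨by linarith, by linarith⟩).1⟩

theorem exists_dyadic_index {ρ r : ℝ} (hr : 0 < r) (hrρ : r ≤ ρ) :
    ∃ j : ℕ, ρ / 2 ^ (j + 1) < r ∧ r ≤ ρ / 2 ^ j := by
  have hρ := hr.trans_le hrρ
  obtain ⟨j, hj₁, hj₂⟩ := exists_nat_pow_near_of_lt_one (div_pos hr hρ)
    ((div_le_one hρ).2 hrρ) (by norm_num : (0:ℝ) < 1 / 2) (by norm_num : (1 / 2 : ℝ) < 1)
  have hscale : ∀ k : ℕ, (1 / 2 : ℝ) ^ k * ρ = ρ / 2 ^ k := fun k => by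
    rw [one_div, inv_pow, div_eq_mul_inv, mul_comm]
  rw [lt_div_iff₀ hρ, hscale] at hj₁
  rw [div_le_iff₀ hρ, hscale] at hj₂
  exact ⟨j, hj₁, hj₂⟩

theorem sum_le_sum_range_card_filter_mul {α : Type*} {t : Finset α} {g : α → ℕ}
    {f : α → ℝ≥0∞} {b : ℕ → ℝ≥0∞} (h : ∀ p ∈ t, f p ≤ b (g p)) :
    ∑ p ∈ t, f p ≤ ∑ j ∈ Finset.range (t.sup g + 1), (t.filter (g · = j)).card * b j := by
  rw [← Finset.sum_fiberwise_of_maps_to fun p hp =>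
    Finset.mem_range.2 (Nat.lt_succ_of_le (Finset.le_sup hp))]
  gcongr with j
  rw [← nsmul_eq_mul]
  refine Finset.sum_le_card_nsmul _ _ _ fun p hp => ?_
  obtain ⟨hpt, rfl⟩ := Finset.mem_filter.1 hp
  exact h p hpt

section Dyadic

variable {X : Type*} [MetricSpace X]

theorem IsPack.card_filter_index_le_coveringNumber {E : Set X} {ρ : ℝ} {t : Finset (X × ℝ)}
    (ht : IsPack E ρ t) {g : X × ℝ → ℕ} (hg : ∀ p ∈ t, ρ / 2 ^ (g p + 1) < p.2) (n : ℕ) :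
    ((t.filter (g · ≤ n)).card : ℝ≥0∞) ≤ coveringNumber E (ρ / 2 ^ (n + 2)) := by
  refine le_trans ?_ ht.card_filter_le_coveringNumber
  refine Nat.mono_cast (Finset.card_le_card (Finset.monotone_filter_right _ fun p hpt hp => ?_))
  calc 2 * (ρ / 2 ^ (n + 2)) = ρ / 2 ^ (n + 1) := by rw [pow_succ _ (n + 1)]; field_simp
    _ ≤ ρ / 2 ^ (g p + 1) := by
        have hρ : 0 < ρ := (ht.1 p hpt).2.1.trans_le (ht.1 p hpt).2.2
        gcongr
        exact one_le_two
    _ ≤ p.2 := (hg p hpt).le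

/-- Sort the balls of a pack by dyadic size `ρ / 2 ^ j`: the number of balls of index at most `n`
is at most `N(E, ρ / 2 ^ (n + 2)) ≤ η / ψ (ρ / 2 ^ n)`, and Abel summation then bounds the
`φ`-sum of the pack. -/
theorem IsPack.sum_le_of_gauge_bounds {E : Set X} {ρ θ η : ℝ} {t : Finset (X × ℝ)}
    {φ ψ χ : ℝ → ℝ} (ht : IsPack E ρ t) (hθ0 : 0 < θ) (hθ1 : θ ≤ 1) (hη : 0 < η)
    (hφ : MonotoneOn φ (Ioc 0 ρ)) (hψ : MonotoneOn ψ (Ioc 0 ρ))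
    (hψ0 : ∀ x ∈ Ioc 0 ρ, 0 < ψ x) (hφψ : ∀ x ∈ Ioc 0 ρ, φ x ≤ ψ x ^ (1 + θ))
    (hψχ : ∀ x ∈ Ioc 0 ρ, ψ x ≤ η * χ (x / 4))
    (hχ : ∀ x ∈ Ioc 0 ρ, coveringNumber E x * ENNReal.ofReal (χ x) ≤ 1) :
    ∑ p ∈ t, ENNReal.ofReal (φ p.2) ≤ ENNReal.ofReal (η * ψ ρ ^ θ * (1 + θ⁻¹)) := by
  classical
  rcases t.eq_empty_or_nonempty with rfl | ⟨p₀, hp₀⟩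
  · simp
  have hρ : 0 < ρ := (ht.1 p₀ hp₀).2.1.trans_le (ht.1 p₀ hp₀).2.2
  set x : ℕ → ℝ := fun j => ρ / 2 ^ j with hx_def
  have hx : ∀ j, x j ∈ Ioc 0 ρ := fun j =>
    ⟨by positivity, div_le_self hρ.le (one_le_pow₀ one_le_two)⟩
  have hx_anti : Antitone x := antitone_nat_of_succ_le fun j =>
    div_le_div_of_nonneg_left hρ.le (by positivity) (pow_le_pow_right₀ one_le_two j.le_succ)
  choose! g hg using fun p (hp : p ∈ t) => exists_dyadic_index (ht.1 p hp).2.1 (ht.1 p hp).2.2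
  set m : ℕ → ℝ := fun j => ((t.filter (g · = j)).card : ℝ) with hm_def
  have hsum : ∑ p ∈ t, ENNReal.ofReal (φ p.2) ≤
      ENNReal.ofReal (∑ j ∈ Finset.range (t.sup g + 1), m j * ψ (x j) ^ (1 + θ)) := by
    rw [ENNReal.ofReal_sum_of_nonneg fun j _ =>
      mul_nonneg (Nat.cast_nonneg _) (Real.rpow_nonneg (hψ0 _ (hx j)).le _)]
    simp only [ENNReal.ofReal_mul (Nat.cast_nonneg _), ENNReal.ofReal_natCast]
    exact sum_le_sum_range_card_filter_mul fun p hp => ENNReal.ofReal_le_ofReal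
      ((hφ (ht.1 p hp).2 (hx _) (hg p hp).2).trans (hφψ _ (hx _)))
  have hcount : ∀ n, ∑ j ∈ Finset.range (n + 1), m j ≤ η / ψ (x n) := by
    intro n
    have hx4 : x n / 4 = ρ / 2 ^ (n + 2) := by rw [hx_def, div_div, pow_add]; norm_num
    have hχ0 : 0 < χ (x n / 4) :=
      pos_of_mul_pos_right ((hψ0 _ (hx n)).trans_le (hψχ _ (hx n))) hη.le
    have hN : ((t.filter (g · ≤ n)).card : ℝ≥0∞) ≤ ENNReal.ofReal (χ (x n / 4))⁻¹ := by
      rw [ENNReal.ofReal_inv_of_pos hχ0, ENNReal.le_inv_iff_mul_le]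
      refine (mul_le_mul_left ?_ _).trans (hχ _ ⟨by positivity, ?_⟩)
      · exact hx4 ▸ ht.card_filter_index_le_coveringNumber (fun p hp => (hg p hp).1) n
      · exact (div_le_self (hx n).1.le (by norm_num)).trans (hx n).2
    rw [← ENNReal.ofReal_natCast, ENNReal.ofReal_le_ofReal_iff (inv_nonneg.2 hχ0.le)] at hN
    calc ∑ j ∈ Finset.range (n + 1), m j = ((t.filter (g · ≤ n)).card : ℝ) := by
          simp only [hm_def, ← Nat.cast_sum, Finset.sum_card_fiberwise_eq_card_filter,
            Finset.mem_range, Nat.lt_succ_iff]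
      _ ≤ (χ (x n / 4))⁻¹ := hN
      _ ≤ η / ψ (x n) := by
          rw [le_div_iff₀ (hψ0 _ (hx n)), inv_mul_le_iff₀ hχ0, mul_comm]
          exact hψχ _ (hx n)
  calc ∑ p ∈ t, ENNReal.ofReal (φ p.2) ≤ _ := hsum
    _ ≤ ENNReal.ofReal (η * ψ (x 0) ^ θ * (1 + θ⁻¹)) := ENNReal.ofReal_le_ofReal
        (sum_range_mul_rpow_le hθ0 hθ1 hη.le (fun n => hψ0 _ (hx n))
          (fun i j hij => hψ (hx j) (hx i) (hx_anti hij)) hcount _)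
    _ = _ := by simp [hx_def]

end Dyadic

section PackingScale

variable {X : Type*} [MetricSpace X] {s : ℝ → ℝ → ℝ}

theorem IsScaling.packingPre_le (hs : IsScaling s) {E : Set X} {α β γ θ η ρ : ℝ}
    (hα : 0 < α) (hβ : 0 < β) (hγ : 0 < γ) (hθ0 : 0 < θ) (hθ1 : θ ≤ 1) (hη : 0 < η)
    (hρ1 : ρ < 1)
    (hsmall : ∀ x ∈ Ioc 0 ρ, x ^ (1 + θ) ≤ 1 / 4 * x ∧ s α x / s γ x ^ (1 + θ) < 1 ∧
      s γ x / s β (x ^ (1 + θ)) < η ∧ coveringNumber E x * ENNReal.ofReal (s β x) < 1) :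
    packingPre (s α) E ρ ≤ ENNReal.ofReal (η * s γ ρ ^ θ * (1 + θ⁻¹)) := by
  obtain ⟨hpos, hmono, -⟩ := hs
  have hsub : Ioc 0 ρ ⊆ Ioo 0 1 := fun x hx => ⟨hx.1, hx.2.trans_lt hρ1⟩
  have hpow : ∀ x ∈ Ioc 0 ρ, x ^ (1 + θ) ∈ Ioo 0 1 := fun x hx =>
    ⟨Real.rpow_pos_of_pos hx.1 _, (hsmall x hx).1.trans_lt (by linarith [(hsub hx).2])⟩
  have hφψ : ∀ x ∈ Ioc 0 ρ, s α x ≤ s γ x ^ (1 + θ) := fun x hx =>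
    ((div_lt_one (Real.rpow_pos_of_pos (hpos γ hγ x (hsub hx)) _)).1 (hsmall x hx).2.1).le
  have hψχ : ∀ x ∈ Ioc 0 ρ, s γ x ≤ η * s β (x / 4) := fun x hx => by
    have hlt := (div_lt_iff₀ (hpos β hβ _ (hpow x hx))).1 (hsmall x hx).2.2.1
    refine hlt.le.trans (mul_le_mul_of_nonneg_left ?_ hη.le)
    exact hmono β hβ (hpow x hx) ⟨by linarith [hx.1], by linarith [(hsub hx).2]⟩
      (by linarith [(hsmall x hx).1])
  exact iSup₂_le fun t ht => IsPack.sum_le_of_gauge_bounds ht hθ0 hθ1 hη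
    ((hmono α hα).mono hsub) ((hmono γ hγ).mono hsub) (fun x hx => hpos γ hγ x (hsub hx))
    hφψ hψχ fun x hx => (hsmall x hx).2.2.2.le

theorem packingPre0_eq_zero_of_tendsto (hs : IsScaling s) {E : Set X} {α β : ℝ} (hβ : 0 < β)
    (hβα : β < α)
    (hN : Tendsto (fun ε => coveringNumber E ε * ENNReal.ofReal (s β ε)) (𝓝[>] 0) (𝓝 0)) :
    packingPre0 (s α) E = 0 := by
  have hβγ : β < (α + β) / 2 := by linarith
  have hγα : (α + β) / 2 < α := by linarith
  set γ := (α + β) / 2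
  have hγ : 0 < γ := hβ.trans hβγ
  obtain ⟨θ, hθ0, hθ1, hαγ, hγβ⟩ := hs.exists_exponent hβ hβγ hγα
  set K := s γ (1 / 2) ^ θ * (1 + θ⁻¹)
  have hbound : ∀ η > 0, packingPre0 (s α) E ≤ ENNReal.ofReal (η * K) := by
    intro η hη
    have hev : ∀ᶠ x in 𝓝[>] (0:ℝ), x ≤ 1 / 2 ∧ x ^ (1 + θ) ≤ 1 / 4 * x ∧
        s α x / s γ x ^ (1 + θ) < 1 ∧ s γ x / s β (x ^ (1 + θ)) < η ∧
        coveringNumber E x * ENNReal.ofReal (s β x) < 1 :=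
      (eventually_nhdsWithin_of_eventually_nhds (eventually_le_nhds (by norm_num))).and <|
        (eventually_rpow_one_add_le_mul hθ0 (by norm_num)).and <|
        (hαγ.eventually (gt_mem_nhds one_pos)).and <|
        (hγβ.eventually (gt_mem_nhds hη)).and (hN.eventually (gt_mem_nhds one_pos))
    obtain ⟨ρ, hρ, hρP⟩ := (nhdsGT_basis_Ioc_of_exists_gt ⟨1, one_pos⟩).eventually_iff.1 hev
    have hρ2 : ρ ≤ 1 / 2 := (hρP ⟨hρ, le_rfl⟩).1
    have hγρ : s γ ρ ≤ s γ (1 / 2) :=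
      hs.2.1 γ hγ ⟨hρ, by linarith⟩ ⟨by norm_num, by norm_num⟩ hρ2
    calc packingPre0 (s α) E ≤ packingPre (s α) E ρ := iInf₂_le ρ hρ
      _ ≤ ENNReal.ofReal (η * s γ ρ ^ θ * (1 + θ⁻¹)) :=
        hs.packingPre_le (by linarith) hβ hγ hθ0 hθ1 hη (by linarith) fun x hx => (hρP hx).2
      _ ≤ ENNReal.ofReal (η * K) := by
        rw [mul_assoc]
        refine ENNReal.ofReal_le_ofReal (mul_le_mul_of_nonneg_left ?_ hη.le)
        exact mul_le_mul_of_nonneg_right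
          (Real.rpow_le_rpow (hs.1 γ hγ ρ ⟨hρ, by linarith⟩).le hγρ hθ0.le) (by positivity)
  have hlim : Tendsto (fun η => ENNReal.ofReal (η * K)) (𝓝[>] 0) (𝓝 0) := by
    have := ((tendsto_id (x := 𝓝 (0:ℝ))).mul_const K).mono_left
      (nhdsWithin_le_nhds (s := Ioi 0))
    simpa using ENNReal.tendsto_ofReal this
  exact le_antisymm (ge_of_tendsto hlim (eventually_nhdsWithin_of_forall hbound)) zero_le

theorem packingMeasureOf_eq_zero_of_packingScale_lt (hs : IsScaling s) {A : Set X} {α : ℝ}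
    (hα : 0 < α) (h : packingScale s A < ENNReal.ofReal α) : packingMeasureOf (s α) A = 0 := by
  obtain ⟨F, hF, hsup⟩ : ∃ F : ℕ → Set X, (⋃ n, F n) = A ∧
      ⨆ n, upperBoxScale s (F n) < ENNReal.ofReal α := by
    simpa [packingScale, iInf_lt_iff] using h
  have hzero : ∀ n, packingPre0 (s α) (F n) = 0 := fun n => by
    obtain ⟨β, ⟨hβ, hN⟩, hβα⟩ : ∃ β, (0 < β ∧ Tendsto (fun ε => coveringNumber (F n) ε *
        ENNReal.ofReal (s β ε)) (𝓝[>] 0) (𝓝 0)) ∧ ENNReal.ofReal β < ENNReal.ofReal α := by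
      simpa only [upperBoxScale, iInf_lt_iff, exists_prop] using (le_iSup _ n).trans_lt hsup
    exact packingPre0_eq_zero_of_tendsto hs hβ ((ENNReal.ofReal_lt_ofReal_iff hα).1 hβα) hN
  exact le_antisymm ((iInf₂_le F hF).trans (by simp [hzero])) zero_le

end PackingScale

/-- Characterization of the packing scale via the packing measure:
`sup {α > 0 : P^{scl_α}(X) = ∞} = scl_P X = inf {α > 0 : P^{scl_α}(X) = 0}`. -/
theorem packingScale_eq_packingMeasure_char
    {X : Type*} [MetricSpace X] (s : ℝ → ℝ → ℝ) (hs : IsScaling s) :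
    (⨆ (α : ℝ) (_ : 0 < α ∧ packingMeasureOf (s α) (Set.univ : Set X) = ⊤),
        ENNReal.ofReal α) = packingScale s (Set.univ : Set X) ∧
    packingScale s (Set.univ : Set X) =
      (⨅ (α : ℝ) (_ : 0 < α ∧ packingMeasureOf (s α) (Set.univ : Set X) = 0),
        ENNReal.ofReal α) :=
  iSup_ofReal_eq_and_eq_iInf_ofReal
    (fun _ hα h => packingMeasureOf_eq_zero_of_packingScale_lt hs hα h)
    (fun _ hα h => packingScale_le_of_packingMeasureOf_ne_top hs hα h)

end
end

section
/- Let (X,d) be a metric space, scl a scaling, and (E_i)_{i≥1} a countable cover of X. Then the Hausdorff and packing scales are countably stable: scl_H X = sup_{i≥1} scl_H E_i and scl_P X = sup_{i≥1} scl_P E_i. -/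
open Filter MeasureTheory Metric Set
open scoped ENNReal Topology NNReal

noncomputable section

/-! Both scales are monotone, so only the inequalities `≤ ⨆ i` need proof. If
`H^{scl_α}(X) = ∞`, countable subadditivity of `H^{scl_α}` gives an `E_i` with
`H^{scl_α}(E_i) > 0`; since `scl_α = o(scl_β)` at `0` for `β < α`, this forces
`H^{scl_β}(E_i) = ∞`, so `scl_H E_i ≥ β` for every `β < α`. For the packing scale, countable
covers of the `E_i` that nearly realise their packing scales are merged, through the pairing
`ℕ × ℕ ≃ ℕ`, into one countable cover of `X`. The only delicate point is monotonicity of the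
upper box scale: covering numbers use centres in the set, which only gives
`N_ε(F) ≤ N_{ε/2}(E)` for `F ⊆ E`, and the scaling axiom absorbs the halved radius. -/

namespace IsScaling

variable {s : ℝ → ℝ → ℝ} {α β c : ℝ}

theorem eventually_mul_le_half (hs : IsScaling s) (hβ : 0 < β) (hβα : β < α) (hc : 0 < c) :
    ∀ᶠ ε in 𝓝[>] (0:ℝ), c * s α ε ≤ s β (ε / 2) := by
  obtain ⟨l₀, hl₀, hlim⟩ := hs.2.2 α β hβ hβα
  obtain ⟨l, hl⟩ := nonempty_Ioo.2 hl₀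
  have hratio : ∀ᶠ ε in 𝓝[>] (0:ℝ), s α ε / s β (ε ^ l) < c⁻¹ :=
    (hlim l hl).1.eventually (gt_mem_nhds (inv_pos.2 hc))
  -- `ε ^ l = ε * ε ^ (l - 1)` and `ε ^ (l - 1) → 0`, so eventually `ε ^ l ≤ ε / 2`.
  have hpow : ∀ᶠ ε in 𝓝[>] (0:ℝ), ε ^ (l - 1) < 2⁻¹ := by
    have hcont := Real.continuousAt_rpow_const 0 (l - 1) (Or.inr (by linarith [hl.1]))
    rw [ContinuousAt, Real.zero_rpow (by linarith [hl.1])] at hcont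
    exact (hcont.mono_left nhdsWithin_le_nhds).eventually (gt_mem_nhds (by norm_num))
  filter_upwards [hratio, hpow, Ioo_mem_nhdsGT one_pos] with ε hε hεpow ⟨hε0, hε1⟩
  have hεl : ε ^ l ≤ ε / 2 := by
    rw [show l = 1 + (l - 1) by ring, Real.rpow_add hε0, Real.rpow_one]
    nlinarith
  have hεl_mem : ε ^ l ∈ Ioo (0:ℝ) 1 := ⟨by positivity, by linarith⟩
  have hpos := hs.1 β hβ _ hεl_mem
  calc c * s α ε ≤ s β (ε ^ l) := by
        rw [div_lt_iff₀ hpos] at hε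
        nlinarith [inv_mul_cancel₀ hc.ne']
    _ ≤ s β (ε / 2) := hs.2.1 β hβ hεl_mem ⟨by linarith, by linarith⟩ hεl

theorem eventually_mul_le (hs : IsScaling s) (hβ : 0 < β) (hβα : β < α) (hc : 0 < c) :
    ∀ᶠ ε in 𝓝[>] (0:ℝ), c * s α ε ≤ s β ε := by
  filter_upwards [hs.eventually_mul_le_half hβ hβα hc, Ioo_mem_nhdsGT one_pos]
    with ε hε ⟨hε0, hε1⟩
  exact hε.trans (hs.2.1 β hβ ⟨by linarith, by linarith⟩ ⟨hε0, hε1⟩ (by linarith))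

end IsScaling

section Hausdorff

variable {X : Type*} [MetricSpace X] {φ ψ : ℝ → ℝ} {E F : Set X} {ε : ℝ}

theorem hausdorffPre_le_tsum {c : ℕ → X} {r : ℕ → ℝ} {t : Set ℕ}
    (hr : ∀ n ∈ t, r n ∈ Ioc 0 ε) (hE : E ⊆ ⋃ n ∈ t, ball (c n) (r n)) :
    hausdorffPre φ E ε ≤ ∑' n : t, ENNReal.ofReal (φ (r n)) :=
  iInf_le_of_le c <| iInf_le_of_le r <| iInf₂_le t ⟨hr, hE⟩

theorem exists_cover_of_hausdorffPre_lt {a : ℝ≥0∞} (h : hausdorffPre φ E ε < a) :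
    ∃ (c : ℕ → X) (r : ℕ → ℝ) (t : Set ℕ), ((∀ n ∈ t, r n ∈ Ioc 0 ε) ∧
      E ⊆ ⋃ n ∈ t, ball (c n) (r n)) ∧ ∑' n : t, ENNReal.ofReal (φ (r n)) < a := by
  simpa only [hausdorffPre, iInf_lt_iff, exists_prop] using h

theorem hausdorffPre_mono (h : F ⊆ E) (ε : ℝ) : hausdorffPre φ F ε ≤ hausdorffPre φ E ε :=
  le_iInf fun _ => le_iInf fun _ => le_iInf₂ fun _ ht => hausdorffPre_le_tsum ht.1 (h.trans ht.2)

theorem hausdorffPre_anti {ε' : ℝ} (h : ε ≤ ε') : hausdorffPre φ E ε' ≤ hausdorffPre φ E ε :=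
  le_iInf fun _ => le_iInf fun _ => le_iInf₂ fun _ ht =>
    hausdorffPre_le_tsum (fun n hn => ⟨(ht.1 n hn).1, (ht.1 n hn).2.trans h⟩) ht.2

theorem hausdorffPre_le_hausdorffMeasureOf (hε : 0 < ε) :
    hausdorffPre φ E ε ≤ hausdorffMeasureOf φ E :=
  le_iSup₂ (f := fun ε (_ : 0 < ε) => hausdorffPre φ E ε) ε hε

theorem hausdorffMeasureOf_mono (h : F ⊆ E) : hausdorffMeasureOf φ F ≤ hausdorffMeasureOf φ E :=
  iSup₂_le fun ε hε => (hausdorffPre_mono h ε).trans (hausdorffPre_le_hausdorffMeasureOf hε)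

theorem hausdorffPre_iUnion_le_of_cover {E : ℕ → Set X} {c : ℕ → ℕ → X} {r : ℕ → ℕ → ℝ}
    {t : ℕ → Set ℕ} (hr : ∀ i, ∀ n ∈ t i, r i n ∈ Ioc 0 ε)
    (hE : ∀ i, E i ⊆ ⋃ n ∈ t i, ball (c i n) (r i n)) :
    hausdorffPre φ (⋃ i, E i) ε ≤ ∑' i, ∑' n : t i, ENNReal.ofReal (φ (r i n)) := by
  set T : Set ℕ := {k | k.unpair.2 ∈ t k.unpair.1}
  have hcover : ⋃ i, E i ⊆ ⋃ k ∈ T, ball (c k.unpair.1 k.unpair.2) (r k.unpair.1 k.unpair.2) := by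
    refine iUnion_subset fun i x hx => ?_
    obtain ⟨n, hn, hxn⟩ := mem_iUnion₂.1 (hE i hx)
    refine mem_iUnion₂.2 ⟨Nat.pair i n, ?_, ?_⟩
    · show (Nat.pair i n).unpair.2 ∈ t (Nat.pair i n).unpair.1
      rwa [Nat.unpair_pair]
    · rwa [Nat.unpair_pair]
  refine (hausdorffPre_le_tsum (c := fun k => c k.unpair.1 k.unpair.2)
    (r := fun k => r k.unpair.1 k.unpair.2) (t := T) (fun k hk => hr _ _ hk) hcover).trans_eq ?_
  set g : ℕ → ℕ → ℝ≥0∞ := fun i n => ENNReal.ofReal (φ (r i n))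
  rw [tsum_subtype T (fun k => g k.unpair.1 k.unpair.2),
    tsum_congr fun i => tsum_subtype (t i) (g i), ← ENNReal.tsum_prod, ← Nat.pairEquiv.symm.tsum_eq]
  rfl

theorem hausdorffPre_iUnion_le (E : ℕ → Set X) (ε : ℝ) :
    hausdorffPre φ (⋃ i, E i) ε ≤ ∑' i, hausdorffPre φ (E i) ε := by
  refine ENNReal.le_of_forall_pos_le_add fun δ hδ hfin => ?_
  obtain ⟨w, hw, hwδ⟩ := ENNReal.exists_pos_sum_of_countable (ENNReal.coe_ne_zero.2 hδ.ne') ℕ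
  have hcover : ∀ i, ∃ (c : ℕ → X) (r : ℕ → ℝ) (t : Set ℕ), ((∀ n ∈ t, r n ∈ Ioc 0 ε) ∧
      E i ⊆ ⋃ n ∈ t, ball (c n) (r n)) ∧
      ∑' n : t, ENNReal.ofReal (φ (r n)) < hausdorffPre φ (E i) ε + w i := fun i =>
    exists_cover_of_hausdorffPre_lt <| ENNReal.lt_add_right
      (ne_top_of_le_ne_top hfin.ne (ENNReal.le_tsum i)) (ENNReal.coe_ne_zero.2 (hw i).ne')
  choose c r t ht hsum using hcover
  calc hausdorffPre φ (⋃ i, E i) ε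
      ≤ ∑' i, ∑' n : t i, ENNReal.ofReal (φ (r i n)) :=
        hausdorffPre_iUnion_le_of_cover (fun i => (ht i).1) (fun i => (ht i).2)
    _ ≤ ∑' i, (hausdorffPre φ (E i) ε + w i) := ENNReal.tsum_le_tsum fun i => (hsum i).le
    _ = ∑' i, hausdorffPre φ (E i) ε + ∑' i, (w i : ℝ≥0∞) := ENNReal.tsum_add
    _ ≤ ∑' i, hausdorffPre φ (E i) ε + δ := by gcongr

theorem hausdorffMeasureOf_iUnion_le (E : ℕ → Set X) :
    hausdorffMeasureOf φ (⋃ i, E i) ≤ ∑' i, hausdorffMeasureOf φ (E i) :=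
  iSup₂_le fun ε hε => (hausdorffPre_iUnion_le E ε).trans <|
    ENNReal.tsum_le_tsum fun _ => hausdorffPre_le_hausdorffMeasureOf hε

theorem hausdorffPre_mul_le {c : ℝ≥0} (h : ∀ r ∈ Ioc 0 ε, c * φ r ≤ ψ r) :
    c * hausdorffPre φ F ε ≤ hausdorffPre ψ F ε := by
  refine le_iInf fun _ => le_iInf fun r => le_iInf₂ fun t ht => ?_
  calc (c : ℝ≥0∞) * hausdorffPre φ F ε ≤ c * ∑' n : t, ENNReal.ofReal (φ (r n)) :=
        by gcongr; exact hausdorffPre_le_tsum ht.1 ht.2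
    _ = ∑' n : t, ENNReal.ofReal (c * φ (r n)) := by
        rw [← ENNReal.tsum_mul_left]
        simp only [ENNReal.ofReal_mul c.coe_nonneg, ENNReal.ofReal_coe_nnreal]
    _ ≤ ∑' n : t, ENNReal.ofReal (ψ (r n)) :=
        ENNReal.tsum_le_tsum fun n => ENNReal.ofReal_le_ofReal (h _ (ht.1 n n.2))

theorem hausdorffMeasureOf_mul_le {c : ℝ≥0} (h : ∀ᶠ r in 𝓝[>] (0:ℝ), c * φ r ≤ ψ r) :
    c * hausdorffMeasureOf φ F ≤ hausdorffMeasureOf ψ F := by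
  obtain ⟨u, hu, hsub⟩ := mem_nhdsGT_iff_exists_Ioo_subset.1 h
  simp only [hausdorffMeasureOf, ENNReal.mul_iSup]
  refine iSup₂_le fun ε hε => ?_
  have hε' : 0 < min ε (u / 2) := lt_min hε (half_pos hu)
  calc (c : ℝ≥0∞) * hausdorffPre φ F ε ≤ c * hausdorffPre φ F (min ε (u / 2)) :=
        by gcongr; exact hausdorffPre_anti (min_le_left _ _)
    _ ≤ hausdorffPre ψ F (min ε (u / 2)) := hausdorffPre_mul_le fun r hr =>
        hsub ⟨hr.1, hr.2.trans_lt ((min_le_right _ _).trans_lt (half_lt_self hu))⟩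
    _ ≤ ⨆ ε' > 0, hausdorffPre ψ F ε' := hausdorffPre_le_hausdorffMeasureOf hε'

theorem IsScaling.hausdorffMeasureOf_eq_top {s : ℝ → ℝ → ℝ} (hs : IsScaling s) {α β : ℝ}
    (hβ : 0 < β) (hβα : β < α) (hF : hausdorffMeasureOf (s α) F ≠ 0) :
    hausdorffMeasureOf (s β) F = ⊤ := by
  have hmul (n : ℕ) : n * hausdorffMeasureOf (s α) F ≤ hausdorffMeasureOf (s β) F := by
    rcases n.eq_zero_or_pos with rfl | hn
    · simp
    simpa using hausdorffMeasureOf_mul_le (c := n) (by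
      simpa using hs.eventually_mul_le hβ hβα (Nat.cast_pos.2 hn))
  refine top_le_iff.1 ?_
  calc ⊤ = (⨆ n : ℕ, (n : ℝ≥0∞)) * hausdorffMeasureOf (s α) F := by
        rw [ENNReal.iSup_natCast, ENNReal.top_mul hF]
    _ = ⨆ n : ℕ, n * hausdorffMeasureOf (s α) F := ENNReal.iSup_mul _ _
    _ ≤ hausdorffMeasureOf (s β) F := iSup_le hmul

end Hausdorff

section Scales

variable {X : Type*} [MetricSpace X] {s : ℝ → ℝ → ℝ} {E F : Set X}

theorem ofReal_le_hausdorffScale {β : ℝ} (hβ : 0 < β) (h : hausdorffMeasureOf (s β) F = ⊤) :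
    ENNReal.ofReal β ≤ hausdorffScale s F :=
  le_iSup₂ (f := fun γ (_ : 0 < γ ∧ hausdorffMeasureOf (s γ) F = ⊤) => ENNReal.ofReal γ) β ⟨hβ, h⟩

theorem hausdorffScale_mono (h : F ⊆ E) : hausdorffScale s F ≤ hausdorffScale s E :=
  iSup₂_le fun _ hα => ofReal_le_hausdorffScale hα.1 <|
    top_le_iff.1 (hα.2 ▸ hausdorffMeasureOf_mono h)

theorem IsScaling.ofReal_le_hausdorffScale_of_ne_zero (hs : IsScaling s) {α : ℝ}
    (hF : hausdorffMeasureOf (s α) F ≠ 0) : ENNReal.ofReal α ≤ hausdorffScale s F := by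
  refine ENNReal.le_of_forall_pos_nnreal_lt fun β hβ hβα => ?_
  rw [← ENNReal.ofReal_coe_nnreal] at hβα ⊢
  exact ofReal_le_hausdorffScale hβ (hs.hausdorffMeasureOf_eq_top hβ
    ((ENNReal.ofReal_lt_ofReal_iff_of_nonneg β.coe_nonneg).1 hβα) hF)

theorem IsScaling.hausdorffScale_iUnion (hs : IsScaling s) (E : ℕ → Set X) :
    hausdorffScale s (⋃ i, E i) = ⨆ i, hausdorffScale s (E i) := by
  refine le_antisymm (iSup₂_le fun α ⟨_, htop⟩ => ?_)
    (iSup_le fun i => hausdorffScale_mono (subset_iUnion E i))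
  obtain ⟨i, hi⟩ : ∃ i, hausdorffMeasureOf (s α) (E i) ≠ 0 := by
    by_contra! h
    simpa [h, htop] using hausdorffMeasureOf_iUnion_le (φ := s α) E
  exact (hs.ofReal_le_hausdorffScale_of_ne_zero hi).trans
    (le_iSup (fun i => hausdorffScale s (E i)) i)

-- Centres of a cover of `E` need not lie in `F`; moving each centre into `F` doubles the radius.
theorem coveringNumber_le_coveringNumber_half (hFE : F ⊆ E) (ε : ℝ) :
    coveringNumber F ε ≤ coveringNumber E (ε / 2) := by
  classical
  refine le_iInf₂ fun t ⟨_, htE⟩ => ?_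
  have hpick (x : X) : ∃ y, (ball x (ε / 2) ∩ F).Nonempty → y ∈ ball x (ε / 2) ∩ F := by
    by_cases hx : (ball x (ε / 2) ∩ F).Nonempty
    exacts [⟨hx.some, fun _ => hx.some_mem⟩, ⟨x, fun h => absurd h hx⟩]
  choose f hf using hpick
  let t' := (t.filter fun x => (ball x (ε / 2) ∩ F).Nonempty).image f
  have ht'F : (t' : Set X) ⊆ F := by
    intro y hy
    obtain ⟨x, hx, rfl⟩ := Finset.mem_image.1 hy
    exact (hf x (Finset.mem_filter.1 hx).2).2
  have hFt' : F ⊆ ⋃ y ∈ t', ball y ε := by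
    intro z hz
    obtain ⟨x, hxt, hzx⟩ := mem_iUnion₂.1 (htE (hFE hz))
    have hx : (ball x (ε / 2) ∩ F).Nonempty := ⟨z, hzx, hz⟩
    refine mem_iUnion₂.2 ⟨f x, Finset.mem_image_of_mem _ (Finset.mem_filter.2 ⟨hxt, hx⟩), ?_⟩
    have := dist_triangle z x (f x)
    have := mem_ball'.1 (hf x hx).1
    rw [mem_ball] at hzx ⊢
    linarith
  calc coveringNumber F ε ≤ t'.card := iInf₂_le t' ⟨ht'F, hFt'⟩
    _ ≤ t.card := by exact_mod_cast Finset.card_image_le.trans (Finset.card_filter_le _ _)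

theorem IsScaling.upperBoxScale_mono (hs : IsScaling s) (hFE : F ⊆ E) :
    upperBoxScale s F ≤ upperBoxScale s E := by
  refine le_iInf₂ fun α ⟨hα, hlim⟩ => ENNReal.le_of_forall_pos_le_add fun δ hδ _ => ?_
  have hαδ : α < α + δ := lt_add_of_pos_right α hδ
  have hhalf : Tendsto (fun ε : ℝ => ε / 2) (𝓝[>] 0) (𝓝[>] 0) :=
    tendsto_nhdsWithin_of_tendsto_nhds_of_eventually_within _
      (((continuous_id.div_const (2:ℝ)).tendsto' 0 0 (by simp)).mono_left nhdsWithin_le_nhds)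
      (eventually_mem_nhdsWithin.mono fun ε (hε : 0 < ε) => half_pos hε)
  have hbound : ∀ᶠ ε in 𝓝[>] (0:ℝ), coveringNumber F ε * ENNReal.ofReal (s (α + δ) ε) ≤
      coveringNumber E (ε / 2) * ENNReal.ofReal (s α (ε / 2)) := by
    filter_upwards [hs.eventually_mul_le_half hα hαδ one_pos] with ε hε
    gcongr
    · exact coveringNumber_le_coveringNumber_half hFE ε
    · simpa using hε
  have hlimF : Tendsto (fun ε => coveringNumber F ε * ENNReal.ofReal (s (α + δ) ε))
      (𝓝[>] 0) (𝓝 0) :=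
    tendsto_of_tendsto_of_tendsto_of_le_of_le' tendsto_const_nhds (hlim.comp hhalf)
      (Eventually.of_forall fun _ => zero_le) hbound
  calc upperBoxScale s F ≤ ENNReal.ofReal (α + δ) := iInf₂_le _ ⟨by positivity, hlimF⟩
    _ = ENNReal.ofReal α + δ := by
        rw [ENNReal.ofReal_add hα.le δ.coe_nonneg, ENNReal.ofReal_coe_nnreal]

theorem IsScaling.packingScale_mono (hs : IsScaling s) (hFE : F ⊆ E) :
    packingScale s F ≤ packingScale s E :=
  le_iInf₂ fun G hG => (iInf₂_le (fun n => G n ∩ F)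
    (by rw [← iUnion_inter, hG, inter_eq_right.2 hFE])).trans <|
    iSup_mono fun _ => hs.upperBoxScale_mono inter_subset_left

theorem packingScale_iUnion_le (E : ℕ → Set X) :
    packingScale s (⋃ i, E i) ≤ ⨆ i, packingScale s (E i) := by
  refine le_of_forall_gt_imp_ge_of_dense fun a ha => ?_
  have hcover (i : ℕ) : ∃ G : ℕ → Set X, (⋃ n, G n) = E i ∧ ⨆ n, upperBoxScale s (G n) < a := by
    have hi : packingScale s (E i) < a := (le_iSup (fun i => packingScale s (E i)) i).trans_lt ha
    simpa only [packingScale, iInf_lt_iff, exists_prop] using hi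
  choose G hG hGa using hcover
  have hGE : (⋃ k : ℕ, G k.unpair.1 k.unpair.2) = ⋃ i, E i := by
    simp only [Set.iUnion_unpair, hG]
  calc packingScale s (⋃ i, E i) ≤ ⨆ k : ℕ, upperBoxScale s (G k.unpair.1 k.unpair.2) :=
        iInf₂_le (fun k : ℕ => G k.unpair.1 k.unpair.2) hGE
    _ = ⨆ (i) (n), upperBoxScale s (G i n) := iSup_unpair fun i n => upperBoxScale s (G i n)
    _ ≤ a := iSup_le fun i => (hGa i).le

theorem IsScaling.packingScale_iUnion (hs : IsScaling s) (E : ℕ → Set X) :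
    packingScale s (⋃ i, E i) = ⨆ i, packingScale s (E i) :=
  le_antisymm (packingScale_iUnion_le E) (iSup_le fun i => hs.packingScale_mono (subset_iUnion E i))

end Scales

/-- Countable stability of the Hausdorff and packing scales. -/
theorem hausdorff_packing_scale_countable_stability
    {X : Type*} [MetricSpace X] (s : ℝ → ℝ → ℝ) (hs : IsScaling s)
    (E : ℕ → Set X) (hE : (⋃ i, E i) = Set.univ) :
    hausdorffScale s (Set.univ : Set X) = ⨆ i, hausdorffScale s (E i) ∧
    packingScale s (Set.univ : Set X) = ⨆ i, packingScale s (E i) := by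
  rw [← hE]
  exact ⟨hs.hausdorffScale_iUnion E, hs.packingScale_iUnion E⟩

end
end

section
/- Let (Z_n)_{n≥1} be nonempty finite sets, Z = ∏_{n≥1} Z_n, and let (ε_n)_{n≥1} be a decreasing sequence in (0,1) with ε_n → 0 and log ε_{n+1} / log ε_n → 1. Endow Z with the metric δ(x,y) = ε_m where m is the least index n with x_n ≠ y_n (and δ(x,y) = 0 if x = y), and let μ = ⊗_{n≥1} μ_n where μ_n is the uniform probability measure on Z_n. Then for any scaling scl and any x ∈ Z: lower-scl_loc μ(x) = lower-scl_B Z = sup{α > 0 : scl_α(ε_n) · ∏_{k=1}^n card(Z_k) → +∞ as n → ∞} and upper-scl_loc μ(x) = upper-scl_B Z = inf{α > 0 : scl_α(ε_n) · ∏_{k=1}^n card(Z_k) → 0 as n → ∞}. -/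
open Filter MeasureTheory Metric Set
open scoped ENNReal Topology NNReal

noncomputable section

/-!
For the ultrametric `δ`, the ball of radius `r ∈ (ε (n+1), ε n]` about any point is the cylinder
of the points sharing its coordinates `0, …, n`. Hence `N_r(Z) = ∏_{k ≤ n} #Z_k` and
`μ (B(x, r)) = 1 / N_r(Z)`, so the local scales at `x` are the box scales of `Z`.
A limit of `N_r(Z) · scl_α(r)` as `r → 0` passes to the subsequence `r = ε n`. Conversely,
`log ε (n+1) / log ε n → 1` gives `ε n ^ λ ≤ ε (n+1) < r` eventually for each `λ > 1`, so the
defining property of a scaling turns a limit along `ε n` at `α` into the limit over all radii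
at every `β < α` (limit `⊤`) or every `γ > α` (limit `0`).
-/

theorem rpow_mem_Ioo_zero_one {r l : ℝ} (hr : r ∈ Ioo (0 : ℝ) 1) (hl : 0 < l) :
    r ^ l ∈ Ioo (0 : ℝ) 1 :=
  ⟨Real.rpow_pos_of_pos hr.1 l, Real.rpow_lt_one hr.1.le hr.2 hl⟩

theorem biSup_ofReal_le_of_forall_lt {p q : ℝ → Prop}
    (h : ∀ α, p α → ∀ β, 0 < β → β < α → q β) :
    ⨆ (α : ℝ) (_ : p α), ENNReal.ofReal α ≤ ⨆ (β : ℝ) (_ : q β), ENNReal.ofReal β := by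
  refine iSup₂_le fun α hpα => le_of_forall_lt fun c hc => ?_
  have hα : 0 < α := ENNReal.ofReal_pos.1 (pos_of_gt hc)
  have hlim : Tendsto ENNReal.ofReal (𝓝[<] α) (𝓝 (ENNReal.ofReal α)) :=
    ENNReal.continuous_ofReal.continuousAt.tendsto.mono_left nhdsWithin_le_nhds
  obtain ⟨β, hcβ, hβ⟩ :=
    ((hlim.eventually (lt_mem_nhds hc)).and (Ioo_mem_nhdsLT hα)).exists
  exact hcβ.trans_le (le_iSup₂_of_le β (h α hpα β hβ.1 hβ.2) le_rfl)

theorem biInf_ofReal_le_of_forall_gt {p q : ℝ → Prop} (h : ∀ α, p α → ∀ γ, α < γ → q γ) :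
    ⨅ (γ : ℝ) (_ : q γ), ENNReal.ofReal γ ≤ ⨅ (α : ℝ) (_ : p α), ENNReal.ofReal α := by
  refine le_iInf₂ fun α hpα => le_of_forall_gt fun c hc => ?_
  have hlim : Tendsto ENNReal.ofReal (𝓝[>] α) (𝓝 (ENNReal.ofReal α)) :=
    ENNReal.continuous_ofReal.continuousAt.tendsto.mono_left nhdsWithin_le_nhds
  obtain ⟨γ, hγc, hαγ⟩ :=
    ((hlim.eventually (gt_mem_nhds hc)).and self_mem_nhdsWithin).exists
  exact (iInf₂_le_of_le γ (h α hpα γ hαγ) le_rfl).trans_lt hγc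

namespace IsScaling

variable {s : ℝ → ℝ → ℝ} (hs : IsScaling s) {α β : ℝ}
include hs

theorem exists_eventually_le_comp_rpow (hβ : 0 < β) (hβα : β < α) :
    ∃ l > (1 : ℝ), ∀ᶠ r in 𝓝[>] (0 : ℝ), s α r ≤ s β (r ^ l) := by
  obtain ⟨l₀, hl₀, hl⟩ := hs.2.2 α β hβ hβα
  obtain ⟨l, hl1, hll₀⟩ := exists_between hl₀
  refine ⟨l, hl1, ?_⟩
  filter_upwards [(hl l ⟨hl1, hll₀⟩).1.eventually_lt_const one_pos,
    Ioo_mem_nhdsGT one_pos] with r hr hr01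
  exact ((div_lt_one (hs.1 β hβ _ (rpow_mem_Ioo_zero_one hr01 (zero_lt_one.trans hl1)))).1 hr).le

theorem eventually_le (hβ : 0 < β) (hβα : β < α) : ∀ᶠ r in 𝓝[>] (0 : ℝ), s α r ≤ s β r := by
  obtain ⟨l, hl1, hl⟩ := hs.exists_eventually_le_comp_rpow hβ hβα
  filter_upwards [hl, Ioo_mem_nhdsGT one_pos] with r hr hr01
  have hrl_le : r ^ l ≤ r := by
    simpa using Real.rpow_le_rpow_of_exponent_ge hr01.1 hr01.2.le hl1.le
  exact hr.trans (hs.2.1 β hβ (rpow_mem_Ioo_zero_one hr01 (zero_lt_one.trans hl1)) hr01 hrl_le)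

end IsScaling

section Radii

variable {ε : ℕ → ℝ}

theorem eventually_rpow_le_succ (hε01 : ∀ n, ε n ∈ Ioo (0 : ℝ) 1)
    (hεlog : Tendsto (fun n => Real.log (ε (n + 1)) / Real.log (ε n)) atTop (𝓝 1))
    {l : ℝ} (hl : 1 < l) : ∀ᶠ n in atTop, ε n ^ l ≤ ε (n + 1) := by
  filter_upwards [hεlog.eventually_lt_const hl] with n hn
  have hlog : l * Real.log (ε n) < Real.log (ε (n + 1)) :=
    (div_lt_iff_of_neg (Real.log_neg (hε01 n).1 (hε01 n).2)).1 hn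
  rw [← Real.log_rpow (hε01 n).1] at hlog
  exact ((Real.log_lt_log_iff (Real.rpow_pos_of_pos (hε01 n).1 l) (hε01 (n + 1)).1).1 hlog).le

/-- For `0 < r ≤ ε 0`, the `n` with `r ∈ Ioc (ε (n + 1)) (ε n)`. -/
def radiusIndex (ε : ℕ → ℝ) (r : ℝ) : ℕ := sInf {n | ε (n + 1) < r}

theorem le_apply_radiusIndex {r : ℝ} (hr : r ≤ ε 0) : r ≤ ε (radiusIndex ε r) := by
  rcases h : radiusIndex ε r with _ | k
  · exact hr
  · exact not_lt.1 (Nat.notMem_of_lt_sInf (h.symm ▸ k.lt_succ_self : k < radiusIndex ε r))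

variable (hε0 : Tendsto ε atTop (𝓝 0))
include hε0

theorem apply_radiusIndex_succ_lt {r : ℝ} (hr : 0 < r) : ε (radiusIndex ε r + 1) < r :=
  Nat.sInf_mem ((hε0.comp (tendsto_add_atTop_nat 1)).eventually_lt_const hr).exists

variable (hanti : Antitone ε) (hpos : ∀ n, 0 < ε n)
include hanti hpos

theorem tendsto_radiusIndex : Tendsto (radiusIndex ε) (𝓝[>] 0) atTop := by
  refine tendsto_atTop.2 fun N => ?_
  filter_upwards [Ioo_mem_nhdsGT (hpos N)] with r hr
  by_contra! h
  exact (hanti (Nat.succ_le_of_lt h)).not_gt ((apply_radiusIndex_succ_lt hε0 hr.1).trans hr.2)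

theorem eventually_nhdsGT_of_eventually_Ioc {p : ℕ → ℝ → Prop}
    (hp : ∀ᶠ n in atTop, ∀ r ∈ Ioc (ε (n + 1)) (ε n), p n r) :
    ∀ᶠ r in 𝓝[>] 0, p (radiusIndex ε r) r := by
  obtain ⟨N, hN⟩ := eventually_atTop.1 hp
  filter_upwards [Ioc_mem_nhdsGT (hpos 0),
    (tendsto_radiusIndex hε0 hanti hpos).eventually_ge_atTop N] with r hr hNr
  exact hN _ hNr r ⟨apply_radiusIndex_succ_lt hε0 hr.1, le_apply_radiusIndex hr.2⟩

end Radii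

section BoxScaleAlongRadii

variable {s : ℝ → ℝ → ℝ} {ε : ℕ → ℝ} (hε01 : ∀ n, ε n ∈ Ioo (0 : ℝ) 1)
  (hε0 : Tendsto ε atTop (𝓝 0)) {a : ℕ → ℝ≥0∞}
include hε01 hε0

section

variable {N : ℝ → ℝ≥0∞} (hN : ∀ n, ∀ r ∈ Ioc (ε (n + 1)) (ε n), N r = a n)
include hN

theorem tendsto_atTop_of_tendsto_nhdsGT (hεdec : StrictAnti ε) {α : ℝ} {c : ℝ≥0∞}
    (h : Tendsto (fun r => N r * ENNReal.ofReal (s α r)) (𝓝[>] 0) (𝓝 c)) :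
    Tendsto (fun n => ENNReal.ofReal (s α (ε n)) * a n) atTop (𝓝 c) := by
  have hε : Tendsto ε atTop (𝓝[>] 0) :=
    tendsto_nhdsWithin_iff.2 ⟨hε0, Eventually.of_forall fun n => (hε01 n).1⟩
  refine (h.comp hε).congr fun n => ?_
  rw [Function.comp_apply, hN n (ε n) ⟨hεdec n.lt_succ_self, le_rfl⟩, mul_comm]

theorem IsScaling.tendsto_nhdsGT_top_of_tendsto_atTop (hs : IsScaling s) (hanti : Antitone ε)
    (hεlog : Tendsto (fun n => Real.log (ε (n + 1)) / Real.log (ε n)) atTop (𝓝 1))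
    {α β : ℝ} (hβ : 0 < β) (hβα : β < α)
    (h : Tendsto (fun n => ENNReal.ofReal (s α (ε n)) * a n) atTop (𝓝 ⊤)) :
    Tendsto (fun r => N r * ENNReal.ofReal (s β r)) (𝓝[>] 0) (𝓝 ⊤) := by
  have hpos : ∀ n, 0 < ε n := fun n => (hε01 n).1
  have hε : Tendsto ε atTop (𝓝[>] 0) :=
    tendsto_nhdsWithin_iff.2 ⟨hε0, Eventually.of_forall hpos⟩
  obtain ⟨l, hl1, hl⟩ := hs.exists_eventually_le_comp_rpow hβ hβα
  have hle : ∀ᶠ n in atTop, ∀ r ∈ Ioc (ε (n + 1)) (ε n),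
      ENNReal.ofReal (s α (ε n)) * a n ≤ N r * ENNReal.ofReal (s β r) := by
    filter_upwards [hε.eventually hl, eventually_rpow_le_succ hε01 hεlog hl1] with n hsn hεn r hr
    rw [hN n r hr, mul_comm]
    gcongr
    exact hsn.trans (hs.2.1 β hβ (rpow_mem_Ioo_zero_one (hε01 n) (zero_lt_one.trans hl1))
      ⟨(hpos _).trans hr.1, hr.2.trans_lt (hε01 n).2⟩ (hεn.trans hr.1.le))
  exact tendsto_nhds_top_mono (h.comp (tendsto_radiusIndex hε0 hanti hpos))
    (eventually_nhdsGT_of_eventually_Ioc hε0 hanti hpos hle)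

theorem IsScaling.tendsto_nhdsGT_zero_of_tendsto_atTop (hs : IsScaling s) (hanti : Antitone ε)
    {α γ : ℝ} (hα : 0 < α) (hαγ : α < γ)
    (h : Tendsto (fun n => ENNReal.ofReal (s α (ε n)) * a n) atTop (𝓝 0)) :
    Tendsto (fun r => N r * ENNReal.ofReal (s γ r)) (𝓝[>] 0) (𝓝 0) := by
  have hpos : ∀ n, 0 < ε n := fun n => (hε01 n).1
  have hε : Tendsto ε atTop (𝓝[>] 0) :=
    tendsto_nhdsWithin_iff.2 ⟨hε0, Eventually.of_forall hpos⟩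
  have hle : ∀ᶠ n in atTop, ∀ r ∈ Ioc (ε (n + 1)) (ε n),
      N r * ENNReal.ofReal (s γ r) ≤ ENNReal.ofReal (s α (ε n)) * a n := by
    filter_upwards [hε.eventually (hs.eventually_le hα hαγ)] with n hsn r hr
    rw [hN n r hr, mul_comm]
    gcongr
    exact (hs.2.1 γ (hα.trans hαγ) ⟨(hpos _).trans hr.1, hr.2.trans_lt (hε01 n).2⟩ (hε01 n)
      hr.2).trans hsn
  exact tendsto_of_tendsto_of_tendsto_of_le_of_le' tendsto_const_nhds
    (h.comp (tendsto_radiusIndex hε0 hanti hpos)) (Eventually.of_forall fun _ => zero_le)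
    (eventually_nhdsGT_of_eventually_Ioc hε0 hanti hpos hle)

end

variable {X : Type*} [MetricSpace X] {E : Set X}

theorem IsScaling.lowerBoxScale_eq_iSup_tendsto_atTop (hs : IsScaling s) (hεdec : StrictAnti ε)
    (hεlog : Tendsto (fun n => Real.log (ε (n + 1)) / Real.log (ε n)) atTop (𝓝 1))
    (hN : ∀ n, ∀ r ∈ Ioc (ε (n + 1)) (ε n), coveringNumber E r = a n) :
    lowerBoxScale s E = ⨆ (α : ℝ) (_ : 0 < α ∧
      Tendsto (fun n => ENNReal.ofReal (s α (ε n)) * a n) atTop (𝓝 ⊤)), ENNReal.ofReal α :=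
  le_antisymm (biSup_mono fun _ h => ⟨h.1, tendsto_atTop_of_tendsto_nhdsGT hε01 hε0 hN hεdec h.2⟩)
    (biSup_ofReal_le_of_forall_lt fun _ h _ hβ hβα => ⟨hβ,
      hs.tendsto_nhdsGT_top_of_tendsto_atTop hε01 hε0 hN hεdec.antitone hεlog hβ hβα h.2⟩)

theorem IsScaling.upperBoxScale_eq_iInf_tendsto_atTop (hs : IsScaling s) (hεdec : StrictAnti ε)
    (hN : ∀ n, ∀ r ∈ Ioc (ε (n + 1)) (ε n), coveringNumber E r = a n) :
    upperBoxScale s E = ⨅ (α : ℝ) (_ : 0 < α ∧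
      Tendsto (fun n => ENNReal.ofReal (s α (ε n)) * a n) atTop (𝓝 0)), ENNReal.ofReal α :=
  le_antisymm
    (biInf_ofReal_le_of_forall_gt fun _ h _ hαγ => ⟨h.1.trans hαγ,
      hs.tendsto_nhdsGT_zero_of_tendsto_atTop hε01 hε0 hN hεdec.antitone h.1 hαγ h.2⟩)
    (biInf_mono fun _ h => ⟨h.1, tendsto_atTop_of_tendsto_nhdsGT hε01 hε0 hN hεdec h.2⟩)

end BoxScaleAlongRadii

section LocalScale

variable {X : Type*} [MetricSpace X] [MeasurableSpace X] {s : ℝ → ℝ → ℝ} (hs : IsScaling s)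
  {μ : Measure X} {x : X} {E : Set X}
  (hμ : ∀ᶠ r in 𝓝[>] (0 : ℝ), μ (ball x r) = (coveringNumber E r)⁻¹)
include hs hμ

theorem tendsto_measure_ball_div_iff {α : ℝ} (hα : 0 < α) (c : ℝ≥0∞) :
    Tendsto (fun r => μ (ball x r) / ENNReal.ofReal (s α r)) (𝓝[>] 0) (𝓝 c⁻¹) ↔
      Tendsto (fun r => coveringNumber E r * ENNReal.ofReal (s α r)) (𝓝[>] 0) (𝓝 c) := by
  have heq : ∀ᶠ r in 𝓝[>] (0 : ℝ), μ (ball x r) / ENNReal.ofReal (s α r) =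
      (coveringNumber E r * ENNReal.ofReal (s α r))⁻¹ := by
    filter_upwards [hμ, Ioo_mem_nhdsGT one_pos] with r hr hr01
    rw [hr, ENNReal.mul_inv (Or.inr ENNReal.ofReal_ne_top)
      (Or.inr (ENNReal.ofReal_pos.2 (hs.1 α hα r hr01)).ne'), div_eq_mul_inv]
  rw [tendsto_congr' heq]
  exact tendsto_inv_iff

theorem lowerLocalScale_eq_lowerBoxScale : lowerLocalScale s μ x = lowerBoxScale s E :=
  iSup_congr fun _ => iSup_congr_Prop (and_congr_right fun hα => by
    simpa using tendsto_measure_ball_div_iff hs hμ hα ⊤) fun _ => rfl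

theorem upperLocalScale_eq_upperBoxScale : upperLocalScale s μ x = upperBoxScale s E :=
  iInf_congr fun _ => iInf_congr_Prop (and_congr_right fun hα => by
    simpa using tendsto_measure_ball_div_iff hs hμ hα 0) fun _ => rfl

end LocalScale

section Cylinder

variable {Z : ℕ → Type*} [MetricSpace (∀ n, Z n)]

theorem ball_eq_cylinder {ε : ℕ → ℝ} (hpos : ∀ n, 0 < ε n) (hanti : Antitone ε)
    (hdist : ∀ x y : ∀ n, Z n, x ≠ y → dist x y = ε (sInf {n | x n ≠ y n}))
    {n : ℕ} {r : ℝ} (hr : r ∈ Ioc (ε (n + 1)) (ε n)) (z : ∀ n, Z n) :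
    ball z r = {y | ∀ k < n + 1, y k = z k} := by
  ext y
  rw [mem_ball, mem_ofPred_eq]
  rcases eq_or_ne y z with rfl | hyz
  · simpa using (hpos _).trans hr.1
  rw [hdist y z hyz]
  constructor
  · intro h k hk
    by_contra hne
    exact (hr.2.trans (hanti ((Nat.sInf_le hne).trans (Nat.lt_succ_iff.1 hk)))).not_gt h
  · intro h
    have hn : n + 1 ≤ sInf {k | y k ≠ z k} :=
      le_csInf (Function.ne_iff.1 hyz) fun k hk => not_lt.1 fun hlt => hk (h k hlt)
    exact (hanti hn).trans_lt hr.1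

theorem coveringNumber_univ_eq_prod_card [∀ n, Fintype (Z n)] [∀ n, Nonempty (Z n)]
    {r : ℝ} {n : ℕ} (hball : ∀ z : ∀ k, Z k, ball z r = {y | ∀ k < n, y k = z k}) :
    coveringNumber (univ : Set (∀ k, Z k)) r =
      ∏ k ∈ Finset.range n, (Fintype.card (Z k) : ℝ≥0∞) := by
  classical
  let restrict : (∀ k, Z k) → (∀ k : Fin n, Z k) := fun y k => y k
  let extend : (∀ k : Fin n, Z k) → (∀ k, Z k) := fun v k =>
    if h : k < n then v ⟨k, h⟩ else Classical.arbitrary _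
  have restrict_extend : ∀ v, restrict (extend v) = v := fun v => funext fun k => dif_pos k.2
  have mem_ball_iff : ∀ y c, y ∈ ball c r ↔ restrict y = restrict c := by
    intro y c
    simp [hball, restrict, funext_iff, Fin.forall_iff]
  have hcard : ((Finset.univ : Finset (∀ k : Fin n, Z k)).card : ℝ≥0∞) =
      ∏ k ∈ Finset.range n, (Fintype.card (Z k) : ℝ≥0∞) := by
    rw [Finset.card_univ, Fintype.card_pi, Nat.cast_prod]
    exact Fin.prod_univ_eq_prod_range (fun k => (Fintype.card (Z k) : ℝ≥0∞)) n
  rw [← hcard]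
  refine le_antisymm (iInf₂_le_of_le (Finset.univ.image extend) ⟨subset_univ _, fun y _ => ?_⟩ ?_)
    (le_iInf₂ fun t ht => ?_)
  · exact mem_iUnion₂.2 ⟨extend (restrict y), Finset.mem_image_of_mem _ (Finset.mem_univ _),
      (mem_ball_iff _ _).2 (restrict_extend _).symm⟩
  · exact_mod_cast Finset.card_image_le
  · have hsurj : SurjOn restrict t (Finset.univ : Finset (∀ k : Fin n, Z k)) := fun v _ => by
      obtain ⟨c, hc, hvc⟩ := mem_iUnion₂.1 (ht.2 (mem_univ (extend v)))
      exact ⟨c, hc, ((mem_ball_iff _ _).1 hvc).symm.trans (restrict_extend v)⟩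
    exact_mod_cast Finset.card_le_card_of_surjOn restrict hsurj

end Cylinder

/-- Scales of an infinite product of finite sets with the product (ultra)metric and the
uniform product measure. -/
theorem scales_of_product_of_finite_sets
    {Z : ℕ → Type*} [∀ n, Fintype (Z n)] [∀ n, Nonempty (Z n)]
    [MetricSpace (∀ n, Z n)] [MeasurableSpace (∀ n, Z n)]
    (ε : ℕ → ℝ) (hε01 : ∀ n, ε n ∈ Set.Ioo (0:ℝ) 1) (hεdec : StrictAnti ε)
    (hε0 : Tendsto ε atTop (𝓝 0))
    (hεlog : Tendsto (fun n => Real.log (ε (n + 1)) / Real.log (ε n)) atTop (𝓝 1))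
    (hdist : ∀ x y : ∀ n, Z n, x ≠ y → dist x y = ε (sInf {n | x n ≠ y n}))
    (μ : Measure (∀ n, Z n))
    (hμ : ∀ (x : ∀ n, Z n) (n : ℕ),
      μ {y | ∀ k < n, y k = x k} = ∏ k ∈ Finset.range n, ((Fintype.card (Z k) : ℝ≥0∞))⁻¹)
    (s : ℝ → ℝ → ℝ) (hs : IsScaling s) (x : ∀ n, Z n) :
    (lowerLocalScale s μ x = lowerBoxScale s (Set.univ : Set (∀ n, Z n)) ∧
     lowerBoxScale s (Set.univ : Set (∀ n, Z n)) =
       ⨆ (α : ℝ) (_ : 0 < α ∧ Tendsto (fun n : ℕ => ENNReal.ofReal (s α (ε n)) *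
           ∏ k ∈ Finset.range (n + 1), (Fintype.card (Z k) : ℝ≥0∞))
         atTop (𝓝 (⊤ : ℝ≥0∞))), ENNReal.ofReal α) ∧
    (upperLocalScale s μ x = upperBoxScale s (Set.univ : Set (∀ n, Z n)) ∧
     upperBoxScale s (Set.univ : Set (∀ n, Z n)) =
       ⨅ (α : ℝ) (_ : 0 < α ∧ Tendsto (fun n : ℕ => ENNReal.ofReal (s α (ε n)) *
           ∏ k ∈ Finset.range (n + 1), (Fintype.card (Z k) : ℝ≥0∞))
         atTop (𝓝 (0 : ℝ≥0∞))), ENNReal.ofReal α) := by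
  have hpos : ∀ n, 0 < ε n := fun n => (hε01 n).1
  have hball {n : ℕ} {r : ℝ} (hr : r ∈ Ioc (ε (n + 1)) (ε n)) :=
    ball_eq_cylinder hpos hεdec.antitone hdist hr
  have hcov : ∀ n, ∀ r ∈ Ioc (ε (n + 1)) (ε n), coveringNumber (univ : Set (∀ n, Z n)) r =
      ∏ k ∈ Finset.range (n + 1), (Fintype.card (Z k) : ℝ≥0∞) :=
    fun n r hr => coveringNumber_univ_eq_prod_card (hball hr)
  have hμball : ∀ᶠ r in 𝓝[>] (0 : ℝ),
      μ (ball x r) = (coveringNumber (univ : Set (∀ n, Z n)) r)⁻¹ :=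
    eventually_nhdsGT_of_eventually_Ioc
      (p := fun _ r => μ (ball x r) = (coveringNumber (univ : Set (∀ n, Z n)) r)⁻¹)
      hε0 hεdec.antitone hpos <| Eventually.of_forall fun n r hr => by
        rw [hball hr, hμ, hcov n r hr, ENNReal.prod_inv_distrib]
        exact fun _ _ _ _ _ => Or.inr (ENNReal.natCast_ne_top _)
  exact ⟨⟨lowerLocalScale_eq_lowerBoxScale hs hμball,
      hs.lowerBoxScale_eq_iSup_tendsto_atTop hε01 hε0 hεdec hεlog hcov⟩,
    upperLocalScale_eq_upperBoxScale hs hμball,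
      hs.upperBoxScale_eq_iInf_tendsto_atTop hε01 hε0 hεdec hcov⟩

end
end
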